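/- arXiv:2109.08434 — 3 statements merged into one kernel-verified Lean document; each statement's English description precedes it below -/
import Mathlib

section
/- Let d ≥ 1 be odd and v ∈ 𝒮(ℝ^d). Then for every s ∈ ℝ and every ω in the unit sphere S^{d−1}, (𝒯v)(−s, ω) = (−1)^{(d−1)/2} (𝒯v)(s, −ω). -/
open MeasureTheory Filter Real Set Metric

noncomputable section

/-- `ℝ^d`. -/
abbrev Rd (d : ℕ) : Type := EuclideanSpace ℝ (Fin d)

/-- Fourier transform on `ℝ^d`: `f̂(ξ) = ∫ e^{-i x·ξ} f(x) dx`. -/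
def FT {d : ℕ} (f : Rd d → ℂ) (ξ : Rd d) : ℂ :=
  ∫ x : Rd d, Complex.exp (-Complex.I * ((inner ℝ x ξ : ℝ) : ℂ)) * f x

/-- One-dimensional Fourier transform `ĝ(ν) = ∫ e^{-isν} g(s) ds`. -/
def FT1 (g : ℝ → ℂ) (ν : ℝ) : ℂ :=
  ∫ s : ℝ, Complex.exp (-Complex.I * (s : ℂ) * (ν : ℂ)) * g s

/-- `τ = (d-1)π/4`. -/
def tau (d : ℕ) : ℝ := ((d : ℝ) - 1) * π / 4

/-- `c₀ = (2 (2π)^{d-1})^{-1/2}`. -/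
def c₀ (d : ℕ) : ℝ := ((2 : ℝ) * (2 * π) ^ ((d : ℝ) - 1)) ^ (-(1/2 : ℝ))

/-- The half-wave evolution `(e^{it|D|} f)(x)`. -/
def halfWave {d : ℕ} (f : Rd d → ℂ) (t : ℝ) (x : Rd d) : ℂ :=
  (((2 * π) ^ d : ℝ) : ℂ)⁻¹ *
    ∫ ξ : Rd d, Complex.exp (Complex.I * ((inner ℝ x ξ : ℝ) : ℂ) + Complex.I * (t : ℂ) * (‖ξ‖ : ℂ)) * FT f ξ

/-- `f⁻_ω(s)`. -/
def fm {d : ℕ} (f : Rd d → ℂ) (ω : Rd d) (s : ℝ) : ℂ :=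
  ((2 * π : ℝ) : ℂ)⁻¹ *
    ∫ ν in Iic (0 : ℝ), Complex.exp (Complex.I * (s : ℂ) * (ν : ℂ)) * ((|ν| ^ (((d : ℝ) - 1) / 2) : ℝ) : ℂ) * FT f (ν • ω)

/-- `g⁺_ω(s)`. -/
def gp {d : ℕ} (g : Rd d → ℂ) (ω : Rd d) (s : ℝ) : ℂ :=
  ((2 * π : ℝ) : ℂ)⁻¹ *
    ∫ ν in Ici (0 : ℝ), Complex.exp (Complex.I * (s : ℂ) * (ν : ℂ)) * ((|ν| ^ (((d : ℝ) - 1) / 2) : ℝ) : ℂ) * FT g (ν • ω)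

/-- `(𝒯 v)(s, ω)`. -/
def opT {d : ℕ} (v : Rd d → ℂ) (s : ℝ) (ω : Rd d) : ℂ :=
  (c₀ d : ℂ) * ((2 * π : ℝ) : ℂ)⁻¹ *
    ∫ ν : ℝ, Complex.exp (Complex.I * (s : ℂ) * (ν : ℂ)) * ((|ν| ^ (((d : ℝ) - 1) / 2) : ℝ) : ℂ) *
      (if ν < 0 then Complex.exp (Complex.I * (tau d : ℂ)) else Complex.exp (-Complex.I * (tau d : ℂ))) *
        FT v (ν • ω)

/-- `(∂ₛ𝒯 v)(s, ω)`. -/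
def opdsT {d : ℕ} (v : Rd d → ℂ) (s : ℝ) (ω : Rd d) : ℂ :=
  (c₀ d : ℂ) * ((2 * π : ℝ) : ℂ)⁻¹ *
    ∫ ν : ℝ, Complex.exp (Complex.I * (s : ℂ) * (ν : ℂ)) * (Complex.I * (ν : ℂ)) * ((|ν| ^ (((d : ℝ) - 1) / 2) : ℝ) : ℂ) *
      (if ν < 0 then Complex.exp (Complex.I * (tau d : ℂ)) else Complex.exp (-Complex.I * (tau d : ℂ))) *
        FT v (ν • ω)

/-- Solution of the linear wave equation with data `(u₀, u₁)`. -/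
def waveSol {d : ℕ} (u₀ u₁ : Rd d → ℂ) (t : ℝ) (x : Rd d) : ℂ :=
  (((2 * π) ^ d : ℝ) : ℂ)⁻¹ *
    ∫ ξ : Rd d, Complex.exp (Complex.I * ((inner ℝ x ξ : ℝ) : ℂ)) *
      (((Real.cos (t * ‖ξ‖) : ℝ) : ℂ) * FT u₀ ξ + ((‖ξ‖⁻¹ * Real.sin (t * ‖ξ‖) : ℝ) : ℂ) * FT u₁ ξ)

/-- Time derivative `∂ₜ u`. -/
def dt {d : ℕ} (u : ℝ → Rd d → ℂ) (t : ℝ) (x : Rd d) : ℂ :=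
  deriv (fun t' : ℝ => u t' x) t

/-- Spatial partial derivative `∂ⱼ u`. -/
def dx {d : ℕ} (u : ℝ → Rd d → ℂ) (t : ℝ) (x : Rd d) (j : Fin d) : ℂ :=
  fderiv ℝ (fun y : Rd d => u t y) x (EuclideanSpace.single j 1)

/-- Surface measure on the unit sphere of `ℝ^d`. -/
def sphMeasure (d : ℕ) : Measure (sphere (0 : Rd d) 1) :=
  (volume : Measure (Rd d)).toSphere

/-!
Substituting `ν ↦ -ν` in the integral defining `(𝒯v)(-s, ω)` leaves `e^{isν}` and `|ν|^{(d-1)/2}`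
unchanged, turns `v̂(νω)` into `v̂(ν(-ω))`, and swaps the two phases `e^{±iτ}`. For `d = 2k + 1`
we have `2τ = kπ`, so the phases differ by the factor `e^{ikπ} = (-1)^k` in either direction
(off the null set `ν = 0`, where the phase is not symmetric).
-/

def tauPhase (d : ℕ) (ν : ℝ) : ℂ :=
  if ν < 0 then Complex.exp (Complex.I * (tau d : ℂ)) else Complex.exp (-Complex.I * (tau d : ℂ))

lemma exp_I_mul_tau_of_odd {d : ℕ} (hodd : Odd d) :
    Complex.exp (Complex.I * (tau d : ℂ)) =
      (-1 : ℂ) ^ ((d - 1) / 2) * Complex.exp (-Complex.I * (tau d : ℂ)) := by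
  obtain ⟨k, rfl⟩ := hodd
  have hk : (2 * k + 1 - 1) / 2 = k := by omega
  have htau : Complex.I * (tau (2 * k + 1) : ℂ) =
      -Complex.I * (tau (2 * k + 1) : ℂ) + k * (π * Complex.I) := by
    simp only [tau]
    push_cast
    ring
  rw [hk, htau, Complex.exp_add, Complex.exp_nat_mul, Complex.exp_pi_mul_I, mul_comm]

lemma exp_neg_I_mul_tau_of_odd {d : ℕ} (hodd : Odd d) :
    Complex.exp (-Complex.I * (tau d : ℂ)) =
      (-1 : ℂ) ^ ((d - 1) / 2) * Complex.exp (Complex.I * (tau d : ℂ)) := by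
  rw [exp_I_mul_tau_of_odd hodd, ← mul_assoc, ← mul_pow, neg_one_mul, neg_neg, one_pow, one_mul]

lemma tauPhase_neg_of_odd {d : ℕ} (hodd : Odd d) {ν : ℝ} (hν : ν ≠ 0) :
    tauPhase d (-ν) = (-1 : ℂ) ^ ((d - 1) / 2) * tauPhase d ν := by
  rcases hν.lt_or_gt with hneg | hpos
  · rw [tauPhase, tauPhase, if_neg (by linarith), if_pos hneg, exp_neg_I_mul_tau_of_odd hodd]
  · rw [tauPhase, tauPhase, if_pos (by linarith), if_neg (by linarith), exp_I_mul_tau_of_odd hodd]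

lemma opT_neg_time {d : ℕ} (v : Rd d → ℂ) (s : ℝ) (ω : Rd d) :
    opT v (-s) ω = (c₀ d : ℂ) * ((2 * π : ℝ) : ℂ)⁻¹ *
      ∫ ν : ℝ, Complex.exp (Complex.I * (s : ℂ) * (ν : ℂ)) * ((|ν| ^ (((d : ℝ) - 1) / 2) : ℝ) : ℂ) *
        tauPhase d (-ν) * FT v (ν • -ω) := by
  rw [opT, ← integral_neg_eq_self]
  congr 2 with ν
  rw [tauPhase, abs_neg, neg_smul, ← smul_neg]
  push_cast
  ring_nf

theorem opT_symmetry_odd_general (d : ℕ) (hodd : Odd d) (v : SchwartzMap (Rd d) ℂ) :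
    ∀ (s : ℝ) (ω : Rd d), ‖ω‖ = 1 →
      opT (⇑v) (-s) ω = (-1 : ℂ) ^ ((d - 1) / 2) * opT (⇑v) s (-ω) := by
  intro s ω _
  rw [opT_neg_time, opT, mul_left_comm]
  congr 1
  rw [← integral_const_mul]
  refine integral_congr_ae ?_
  filter_upwards [Measure.ae_ne volume (0 : ℝ)] with ν hν
  rw [tauPhase_neg_of_odd hodd hν, tauPhase]
  ring

/-- Symmetry of `𝒯` in odd dimension. -/
theorem opT_symmetry_odd (d : ℕ) (hd : 1 ≤ d) (hodd : Odd d) (v : SchwartzMap (Rd d) ℂ) :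
    ∀ (s : ℝ) (ω : Rd d), ‖ω‖ = 1 →
      opT (⇑v) (-s) ω = (-1 : ℂ) ^ ((d - 1) / 2) * opT (⇑v) s (-ω) :=
  opT_symmetry_odd_general d hodd v
end
end

section
/- Let d ≥ 1 and let u₀, u₁ ∈ 𝒮(ℝ^d) be Schwartz functions whose Fourier transforms are compactly supported in ℝ^d ∖ {0}. Define f, g ∈ 𝒮(ℝ^d) by f̂(ξ) = (1/2)(û₀(ξ) + û₁(ξ)/(i|ξ|)) and ĝ(ξ) = (1/2)(û₀(ξ) − û₁(ξ)/(i|ξ|)). Then for every s ∈ ℝ and every ω in the unit sphere S^{d−1}, (∂_s𝒯u₀)(s,ω) − (𝒯u₁)(s,ω) = 2c₀ · (d/ds)( e^{iτ} f⁻_ω(s) + e^{−iτ} g⁺_ω(s) ). -/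
open MeasureTheory Filter Real Set Metric

noncomputable section

/-! On the ray `ν ↦ ν • ω` with `‖ω‖ = 1` we have `‖ν • ω‖ = |ν|`, so the defining relations of
`f̂` and `ĝ` say `2 iν f̂(νω) = iν û₀(νω) - û₁(νω)` for `ν < 0` and
`2 iν ĝ(νω) = iν û₀(νω) - û₁(νω)` for `ν > 0`. Hence the integrand of `∂ₛ𝒯u₀ - 𝒯u₁` is, away from
the null set `{0}`, twice the integrand of `∂ₛ(e^{iτ} f⁻_ω)` on `ν < 0` and of `∂ₛ(e^{-iτ} g⁺_ω)`
on `ν > 0`, where differentiating under the integral sign is legitimate because all the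
integrands are continuous with compact support. -/

theorem norm_cexp_I_mul_mul (t ν : ℝ) : ‖Complex.exp (Complex.I * t * ν)‖ = 1 := by
  rw [Complex.norm_exp]; simp

theorem continuous_FT {d : ℕ} {u : Rd d → ℂ} (hu : Integrable u) : Continuous (FT u) := by
  refine continuous_of_dominated (bound := fun x => ‖u x‖) (fun ξ => ?_) (fun ξ => ?_) hu.norm ?_
  · exact (Continuous.aestronglyMeasurable (by fun_prop)).mul hu.aestronglyMeasurable
  · refine Eventually.of_forall fun x => ?_
    rw [norm_mul, Complex.norm_exp]
    simp
  · exact Eventually.of_forall fun x => Continuous.mul (by fun_prop) continuous_const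

theorem hasDerivAt_integral_cexp_mul {μ : Measure ℝ} {k : ℝ → ℂ} (hk : Integrable k μ)
    (hk' : Integrable (fun ν : ℝ => (ν : ℂ) * k ν) μ) (s : ℝ) :
    HasDerivAt (fun t : ℝ => ∫ ν, Complex.exp (Complex.I * t * ν) * k ν ∂μ)
      (∫ ν, Complex.exp (Complex.I * s * ν) * (Complex.I * ν * k ν) ∂μ) s := by
  have hphase : ∀ t : ℝ, Continuous fun ν : ℝ => Complex.exp (Complex.I * t * ν) := by
    intro t; fun_prop
  have hderiv : ∀ t ν : ℝ, HasDerivAt (fun t : ℝ => Complex.exp (Complex.I * t * ν) * k ν)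
      (Complex.exp (Complex.I * t * ν) * (Complex.I * ν * k ν)) t := by
    intro t ν
    have hlin : HasDerivAt (fun t : ℝ => Complex.I * t * ν) (Complex.I * ν) t := by
      simpa using ((hasDerivAt_id t).ofReal_comp.const_mul Complex.I).mul_const (ν : ℂ)
    simpa only [mul_assoc] using hlin.cexp.mul_const (k ν)
  refine (hasDerivAt_integral_of_dominated_loc_of_deriv_le (bound := fun ν : ℝ => ‖(ν : ℂ) * k ν‖)
    (Metric.ball_mem_nhds s one_pos)
    (Eventually.of_forall fun t => (hphase t).aestronglyMeasurable.mul hk.aestronglyMeasurable)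
    (hk.bdd_mul (hphase s).aestronglyMeasurable
      (ae_of_all _ fun ν => (norm_cexp_I_mul_mul s ν).le))
    ((hphase s).aestronglyMeasurable.mul
      ((hk'.const_mul Complex.I).aestronglyMeasurable.congr (ae_of_all _ fun ν => by ring))) ?_
    hk'.norm (ae_of_all _ fun ν t _ => hderiv t ν)).2
  refine ae_of_all _ fun ν t _ => ?_
  rw [norm_mul, norm_cexp_I_mul_mul, one_mul, mul_assoc, norm_mul, Complex.norm_I, one_mul]

theorem hasDerivAt_setIntegral_cexp_mul {k : ℝ → ℂ} (hk : Continuous k)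
    (hks : HasCompactSupport k) (S : Set ℝ) (s : ℝ) :
    HasDerivAt (fun t : ℝ => ∫ ν in S, Complex.exp (Complex.I * t * ν) * k ν)
      (∫ ν in S, Complex.exp (Complex.I * s * ν) * (Complex.I * ν * k ν)) s :=
  hasDerivAt_integral_cexp_mul (hk.integrable_of_hasCompactSupport hks).restrict
    ((Complex.continuous_ofReal.mul hk).integrable_of_hasCompactSupport hks.mul_left).restrict s

theorem integral_eq_setIntegral_Iic_add_Ici_of_eqOn {E : Type*} [NormedAddCommGroup E]
    [NormedSpace ℝ E] {F G H : ℝ → E} {a : ℝ} (hF : Integrable F) (hG : EqOn F G (Iio a))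
    (hH : EqOn F H (Ioi a)) :
    ∫ x, F x = (∫ x in Iic a, G x) + ∫ x in Ici a, H x := by
  rw [← intervalIntegral.integral_Iio_add_Ici (b := a) hF.integrableOn hF.integrableOn,
    integral_Iic_eq_integral_Iio, integral_Ici_eq_integral_Ioi, integral_Ici_eq_integral_Ioi,
    setIntegral_congr_fun measurableSet_Iio hG, setIntegral_congr_fun measurableSet_Ioi hH]

theorem slice_exponent_nonneg {d : ℕ} (hd : 1 ≤ d) : 0 ≤ ((d : ℝ) - 1) / 2 := by
  have : (1 : ℝ) ≤ d := by exact_mod_cast hd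
  linarith

section radialSlice

variable {E : Type*} [NormedAddCommGroup E] [NormedSpace ℝ E]

def radialSlice (α : ℝ) (w : E → ℂ) (ω : E) (ν : ℝ) : ℂ :=
  ((|ν| ^ α : ℝ) : ℂ) * w (ν • ω)

theorem continuous_radialSlice {α : ℝ} (hα : 0 ≤ α) {w : E → ℂ} (hw : Continuous w) (ω : E) :
    Continuous (radialSlice α w ω) :=
  (Complex.continuous_ofReal.comp (continuous_abs.rpow_const fun _ => Or.inr hα)).mul
    (hw.comp (continuous_id.smul continuous_const))

theorem hasCompactSupport_radialSlice [FiniteDimensional ℝ E] (α : ℝ) {w : E → ℂ}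
    (hw : HasCompactSupport w) {ω : E} (hω : ω ≠ 0) :
    HasCompactSupport (radialSlice α w ω) :=
  (hw.comp_isClosedEmbedding (isClosedEmbedding_smul_left hω)).mul_left

variable {w₀ w₁ w : E → ℂ} {ω : E} {ν : ℝ}

theorem I_mul_radialSlice_sub_of_neg
    (hw : ∀ ξ, w ξ = 1 / 2 * (w₀ ξ + w₁ ξ / (Complex.I * (‖ξ‖ : ℂ))))
    (hω : ‖ω‖ = 1) (hν : ν < 0) (α : ℝ) :
    Complex.I * ν * radialSlice α w₀ ω ν - radialSlice α w₁ ω ν =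
      2 * (Complex.I * ν * radialSlice α w ω ν) := by
  have hnorm : ((‖ν • ω‖ : ℝ) : ℂ) = -ν := by
    rw [norm_smul, hω, mul_one, Real.norm_eq_abs, abs_of_neg hν, Complex.ofReal_neg]
  have hν' : (ν : ℂ) ≠ 0 := Complex.ofReal_ne_zero.mpr hν.ne
  simp only [radialSlice, hw, hnorm]
  field_simp
  ring

theorem I_mul_radialSlice_sub_of_pos
    (hw : ∀ ξ, w ξ = 1 / 2 * (w₀ ξ - w₁ ξ / (Complex.I * (‖ξ‖ : ℂ))))
    (hω : ‖ω‖ = 1) (hν : 0 < ν) (α : ℝ) :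
    Complex.I * ν * radialSlice α w₀ ω ν - radialSlice α w₁ ω ν =
      2 * (Complex.I * ν * radialSlice α w ω ν) := by
  have hnorm : ((‖ν • ω‖ : ℝ) : ℂ) = ν := by
    rw [norm_smul, hω, mul_one, Real.norm_eq_abs, abs_of_pos hν]
  have hν' : (ν : ℂ) ≠ 0 := Complex.ofReal_ne_zero.mpr hν.ne'
  simp only [radialSlice, hw, hnorm]
  field_simp

end radialSlice

theorem integrable_tauPhase_mul_cexp_mul {d : ℕ} {k : ℝ → ℂ} (hk : Continuous k)
    (hks : HasCompactSupport k) (s : ℝ) :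
    Integrable fun ν : ℝ => tauPhase d ν * (Complex.exp (Complex.I * s * ν) * k ν) := by
  refine Integrable.bdd_mul (c := 1)
    (((Continuous.mul (by fun_prop) hk).integrable_of_hasCompactSupport hks.mul_left))
    (Measurable.ite measurableSet_Iio measurable_const measurable_const).aestronglyMeasurable
    (ae_of_all _ fun ν => ?_)
  unfold tauPhase
  split_ifs <;> simp [Complex.norm_exp]

section Representations

variable {d : ℕ} (v : Rd d → ℂ) (s : ℝ) (ω : Rd d)

theorem opT_eq_integral_tauPhase_mul :
    opT v s ω = c₀ d * ((2 * π : ℝ) : ℂ)⁻¹ * ∫ ν : ℝ, tauPhase d ν *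
      (Complex.exp (Complex.I * s * ν) * radialSlice (((d : ℝ) - 1) / 2) (FT v) ω ν) := by
  simp only [opT, tauPhase, radialSlice]
  congr 2
  ext ν
  ring

theorem opdsT_eq_integral_tauPhase_mul :
    opdsT v s ω = c₀ d * ((2 * π : ℝ) : ℂ)⁻¹ * ∫ ν : ℝ, tauPhase d ν *
      (Complex.exp (Complex.I * s * ν) *
        (Complex.I * ν * radialSlice (((d : ℝ) - 1) / 2) (FT v) ω ν)) := by
  simp only [opdsT, tauPhase, radialSlice]
  congr 2
  ext ν
  ring

theorem fm_eq_setIntegral :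
    fm v ω s = ((2 * π : ℝ) : ℂ)⁻¹ * ∫ ν in Iic (0 : ℝ),
      Complex.exp (Complex.I * s * ν) * radialSlice (((d : ℝ) - 1) / 2) (FT v) ω ν := by
  simp only [fm, radialSlice, mul_assoc]

theorem gp_eq_setIntegral :
    gp v ω s = ((2 * π : ℝ) : ℂ)⁻¹ * ∫ ν in Ici (0 : ℝ),
      Complex.exp (Complex.I * s * ν) * radialSlice (((d : ℝ) - 1) / 2) (FT v) ω ν := by
  simp only [gp, radialSlice, mul_assoc]

end Representations

section Slices

variable {d : ℕ} {ω : Rd d}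

theorem hasDerivAt_fm (hd : 1 ≤ d) {v : Rd d → ℂ} (hv : Integrable v)
    (hvs : HasCompactSupport (FT v)) (hω : ω ≠ 0) (s : ℝ) :
    HasDerivAt (fm v ω) (((2 * π : ℝ) : ℂ)⁻¹ * ∫ ν in Iic (0 : ℝ),
      Complex.exp (Complex.I * s * ν) *
        (Complex.I * ν * radialSlice (((d : ℝ) - 1) / 2) (FT v) ω ν)) s := by
  rw [show fm v ω = _ from funext (fm_eq_setIntegral v · ω)]
  exact (hasDerivAt_setIntegral_cexp_mul (continuous_radialSlice (slice_exponent_nonneg hd)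
    (continuous_FT hv) ω) (hasCompactSupport_radialSlice _ hvs hω) _ s).const_mul _

theorem hasDerivAt_gp (hd : 1 ≤ d) {v : Rd d → ℂ} (hv : Integrable v)
    (hvs : HasCompactSupport (FT v)) (hω : ω ≠ 0) (s : ℝ) :
    HasDerivAt (gp v ω) (((2 * π : ℝ) : ℂ)⁻¹ * ∫ ν in Ici (0 : ℝ),
      Complex.exp (Complex.I * s * ν) *
        (Complex.I * ν * radialSlice (((d : ℝ) - 1) / 2) (FT v) ω ν)) s := by
  rw [show gp v ω = _ from funext (gp_eq_setIntegral v · ω)]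
  exact (hasDerivAt_setIntegral_cexp_mul (continuous_radialSlice (slice_exponent_nonneg hd)
    (continuous_FT hv) ω) (hasCompactSupport_radialSlice _ hvs hω) _ s).const_mul _

theorem opdsT_sub_opT_eq (hd : 1 ≤ d) {u₀ u₁ wf wg : Rd d → ℂ}
    (hu₀ : Integrable u₀) (hu₁ : Integrable u₁)
    (hcomp₀ : HasCompactSupport (FT u₀)) (hcomp₁ : HasCompactSupport (FT u₁))
    (hwf : ∀ ξ, wf ξ = 1 / 2 * (FT u₀ ξ + FT u₁ ξ / (Complex.I * (‖ξ‖ : ℂ))))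
    (hwg : ∀ ξ, wg ξ = 1 / 2 * (FT u₀ ξ - FT u₁ ξ / (Complex.I * (‖ξ‖ : ℂ))))
    (hω : ‖ω‖ = 1) (s : ℝ) :
    opdsT u₀ s ω - opT u₁ s ω = c₀ d * ((2 * π : ℝ) : ℂ)⁻¹ *
      (2 * Complex.exp (Complex.I * (tau d : ℂ)) * (∫ ν in Iic (0 : ℝ),
          Complex.exp (Complex.I * s * ν) *
            (Complex.I * ν * radialSlice (((d : ℝ) - 1) / 2) wf ω ν)) +
        2 * Complex.exp (-Complex.I * (tau d : ℂ)) * ∫ ν in Ici (0 : ℝ),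
          Complex.exp (Complex.I * s * ν) *
            (Complex.I * ν * radialSlice (((d : ℝ) - 1) / 2) wg ω ν)) := by
  have hω₀ : ω ≠ 0 := ne_zero_of_norm_ne_zero (by rw [hω]; exact one_ne_zero)
  have hK₀ := continuous_radialSlice (slice_exponent_nonneg hd) (continuous_FT hu₀) ω
  have hK₁ := continuous_radialSlice (slice_exponent_nonneg hd) (continuous_FT hu₁) ω
  have hA := integrable_tauPhase_mul_cexp_mul (d := d)
    (k := fun ν : ℝ => Complex.I * ν * radialSlice (((d : ℝ) - 1) / 2) (FT u₀) ω ν)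
    (by fun_prop) (hasCompactSupport_radialSlice _ hcomp₀ hω₀).mul_left s
  have hB := integrable_tauPhase_mul_cexp_mul (d := d) hK₁
    (hasCompactSupport_radialSlice _ hcomp₁ hω₀) s
  rw [opdsT_eq_integral_tauPhase_mul, opT_eq_integral_tauPhase_mul, ← mul_sub,
    ← integral_sub hA hB, integral_eq_setIntegral_Iic_add_Ici_of_eqOn (hA.sub' hB)
      (G := fun ν => 2 * Complex.exp (Complex.I * (tau d : ℂ)) * (Complex.exp (Complex.I * s * ν) *
        (Complex.I * ν * radialSlice (((d : ℝ) - 1) / 2) wf ω ν)))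
      (H := fun ν => 2 * Complex.exp (-Complex.I * (tau d : ℂ)) * (Complex.exp (Complex.I * s * ν) *
        (Complex.I * ν * radialSlice (((d : ℝ) - 1) / 2) wg ω ν)))
      (fun ν hν => ?neg) (fun ν hν => ?pos), integral_const_mul, integral_const_mul]
  case neg =>
    simp only [tauPhase, if_pos (show ν < 0 from hν)]
    linear_combination (Complex.exp (Complex.I * (tau d : ℂ)) * Complex.exp (Complex.I * s * ν)) *
      I_mul_radialSlice_sub_of_neg hwf hω hν _
  case pos =>
    simp only [tauPhase, if_neg (not_lt.mpr (le_of_lt (show 0 < ν from hν)))]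
    linear_combination (Complex.exp (-Complex.I * (tau d : ℂ)) * Complex.exp (Complex.I * s * ν)) *
      I_mul_radialSlice_sub_of_pos hwg hω hν _

end Slices

theorem opT_fg_identity_general (d : ℕ) (hd : 1 ≤ d) (u₀ u₁ : SchwartzMap (Rd d) ℂ)
    (hcomp₀ : HasCompactSupport (FT (⇑u₀)))
    (hcomp₁ : HasCompactSupport (FT (⇑u₁)))
    (f g : SchwartzMap (Rd d) ℂ)
    (hf : ∀ ξ : Rd d, FT (⇑f) ξ =
      (1 / 2) * (FT (⇑u₀) ξ + FT (⇑u₁) ξ / (Complex.I * (‖ξ‖ : ℂ))))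
    (hg : ∀ ξ : Rd d, FT (⇑g) ξ =
      (1 / 2) * (FT (⇑u₀) ξ - FT (⇑u₁) ξ / (Complex.I * (‖ξ‖ : ℂ)))) :
    ∀ (s : ℝ) (ω : Rd d), ‖ω‖ = 1 →
      opdsT (⇑u₀) s ω - opT (⇑u₁) s ω =
        2 * (c₀ d : ℂ) *
          deriv (fun s' : ℝ =>
            Complex.exp (Complex.I * (tau d : ℂ)) * fm (⇑f) ω s' +
              Complex.exp (-Complex.I * (tau d : ℂ)) * gp (⇑g) ω s') s := by
  intro s ω hω
  have hω₀ : ω ≠ 0 := ne_zero_of_norm_ne_zero (by rw [hω]; exact one_ne_zero)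
  have hcf : HasCompactSupport (FT (⇑f)) := by
    rw [show FT (⇑f) = _ from funext hf]
    exact (hcomp₀.add (hcomp₁.mono fun ξ => by simp +contextual)).mul_left
  have hcg : HasCompactSupport (FT (⇑g)) := by
    rw [show FT (⇑g) = _ from funext hg]
    exact (hcomp₀.sub (hcomp₁.mono fun ξ => by simp +contextual)).mul_left
  rw [((hasDerivAt_fm hd f.integrable hcf hω₀ s).const_mul _).fun_add
      ((hasDerivAt_gp hd g.integrable hcg hω₀ s).const_mul _) |>.deriv,
    opdsT_sub_opT_eq hd u₀.integrable u₁.integrable hcomp₀ hcomp₁ hf hg hω s]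
  ring

/-- The identity `∂ₛ𝒯u₀ - 𝒯u₁ = 2c₀ ∂ₛ(e^{iτ} f⁻_ω + e^{-iτ} g⁺_ω)`. -/
theorem opT_fg_identity (d : ℕ) (hd : 1 ≤ d) (u₀ u₁ : SchwartzMap (Rd d) ℂ)
    (hcomp₀ : HasCompactSupport (FT (⇑u₀))) (h0₀ : (0 : Rd d) ∉ tsupport (FT (⇑u₀)))
    (hcomp₁ : HasCompactSupport (FT (⇑u₁))) (h0₁ : (0 : Rd d) ∉ tsupport (FT (⇑u₁)))
    (f g : SchwartzMap (Rd d) ℂ)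
    (hf : ∀ ξ : Rd d, FT (⇑f) ξ =
      (1 / 2) * (FT (⇑u₀) ξ + FT (⇑u₁) ξ / (Complex.I * (‖ξ‖ : ℂ))))
    (hg : ∀ ξ : Rd d, FT (⇑g) ξ =
      (1 / 2) * (FT (⇑u₀) ξ - FT (⇑u₁) ξ / (Complex.I * (‖ξ‖ : ℂ)))) :
    ∀ (s : ℝ) (ω : Rd d), ‖ω‖ = 1 →
      opdsT (⇑u₀) s ω - opT (⇑u₁) s ω =
        2 * (c₀ d : ℂ) *
          deriv (fun s' : ℝ =>
            Complex.exp (Complex.I * (tau d : ℂ)) * fm (⇑f) ω s' +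
              Complex.exp (-Complex.I * (tau d : ℂ)) * gp (⇑g) ω s') s :=
  opT_fg_identity_general d hd u₀ u₁ hcomp₀ hcomp₁ f g hf hg
end
end

section
/- Let d ≥ 1, f ∈ 𝒮(ℝ^d), ω a unit vector in ℝ^d, and s ∈ ℝ. Then the Radon transform of f, given by the integral of f over the affine hyperplane {y ∈ ℝ^d : ω·y = s}, equals the inverse one-dimensional Fourier transform of ν ↦ f̂(νω) evaluated at s: ∫_{ω^⊥} f(sω + y) dλ_{ω^⊥}(y) = (2π)^{−1} ∫_ℝ e^{isν} f̂(νω) dν, where ω^⊥ = {y ∈ ℝ^d : y·ω = 0} and λ_{ω^⊥} is the (d−1)-dimensional Lebesgue (Haar) measure on the subspace ω^⊥. -/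
open MeasureTheory Filter Real Set Metric

noncomputable section

/-! The Fourier slice theorem: the isometry `(t, y) ↦ t • ω + y` from `ℝ × ω^⊥` onto `E` preserves
volume and turns `⟪x, ν • ω⟫` into `t * ν`, so by Fubini the one-dimensional Fourier transform of
the Radon transform `t ↦ ∫_{ω^⊥} f (t • ω + y)` is `ν ↦ 𝓕 f (ν • ω)`. For Schwartz `f` the Radon
transform is continuous (dominated convergence, as `‖y‖ ≤ ‖t • ω + y‖`) and integrable, and
`ν ↦ 𝓕 f (ν • ω)` is integrable since `𝓕 f` is again Schwartz, so one-dimensional Fourier inversion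
recovers the Radon transform pointwise. -/

open scoped FourierTransform SchwartzMap

section Slicing

variable {E : Type*} [NormedAddCommGroup E] [InnerProductSpace ℝ E] {ω : E}

def sliceIsometry (hω : ‖ω‖ = 1) : WithLp 2 (ℝ × (ℝ ∙ ω)ᗮ) ≃ₗᵢ[ℝ] E :=
  (LinearIsometryEquiv.withLpProdCongr 2 (LinearIsometryEquiv.toSpanUnitSingleton ω hω)
    (LinearIsometryEquiv.refl ℝ _)).trans (ℝ ∙ ω).orthogonalDecomposition.symm

lemma sliceIsometry_toLp (hω : ‖ω‖ = 1) (t : ℝ) (y : (ℝ ∙ ω)ᗮ) :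
    sliceIsometry hω (WithLp.toLp 2 (t, y)) = t • ω + y := by
  simp [sliceIsometry]

lemma norm_le_norm_smul_add (hω : ‖ω‖ = 1) (t : ℝ) (y : (ℝ ∙ ω)ᗮ) : ‖y‖ ≤ ‖t • ω + y‖ := by
  rw [← sliceIsometry_toLp hω, LinearIsometryEquiv.norm_map]
  exact WithLp.norm_snd_le ℝ (WithLp.toLp 2 (t, y))

lemma inner_smul_add_smul (hω : ‖ω‖ = 1) (t ν : ℝ) (y : (ℝ ∙ ω)ᗮ) :
    inner ℝ (t • ω + y) (ν • ω) = t * ν := by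
  have hy : inner ℝ (y : E) ω = 0 :=
    Submodule.inner_left_of_mem_orthogonal (Submodule.mem_span_singleton_self ω) y.2
  simp [inner_add_left, real_inner_smul_left, real_inner_smul_right, hy, hω, mul_comm]

variable [FiniteDimensional ℝ E] [MeasurableSpace E] [BorelSpace E]

def sliceEquiv (hω : ‖ω‖ = 1) : (ℝ × (ℝ ∙ ω)ᗮ) ≃ᵐ E :=
  (MeasurableEquiv.toLp 2 _).trans (sliceIsometry hω).toMeasurableEquiv

lemma sliceEquiv_apply (hω : ‖ω‖ = 1) (p : ℝ × (ℝ ∙ ω)ᗮ) :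
    sliceEquiv hω p = p.1 • ω + p.2 :=
  sliceIsometry_toLp hω p.1 p.2

lemma measurePreserving_sliceEquiv (hω : ‖ω‖ = 1) :
    MeasurePreserving (sliceEquiv hω) (volume.prod volume) volume :=
  (sliceIsometry hω).measurePreserving.comp (WithLp.volume_preserving_toLp _ _)

end Slicing

section Radon

variable {E F : Type*} [NormedAddCommGroup E] [InnerProductSpace ℝ E] [FiniteDimensional ℝ E]
  [MeasurableSpace E] [BorelSpace E] [NormedAddCommGroup F] {ω : E}

lemma integrable_comp_smul_add (hω : ‖ω‖ = 1) {f : E → F} (hf : Integrable f) :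
    Integrable (fun p : ℝ × (ℝ ∙ ω)ᗮ ↦ f (p.1 • ω + p.2)) (volume.prod volume) := by
  simpa only [Function.comp_def, sliceEquiv_apply] using
    ((measurePreserving_sliceEquiv hω).integrable_comp_emb (sliceEquiv hω).measurableEmbedding).2 hf

variable [NormedSpace ℝ F]

def radon (f : E → F) (ω : E) (t : ℝ) : F :=
  ∫ y : (ℝ ∙ ω)ᗮ, f (t • ω + y)

lemma integrable_radon (hω : ‖ω‖ = 1) {f : E → F} (hf : Integrable f) :
    Integrable (radon f ω) :=
  (integrable_comp_smul_add hω hf).integral_prod_left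

lemma integral_radon (hω : ‖ω‖ = 1) {f : E → F} (hf : Integrable f) :
    ∫ t, radon f ω t = ∫ x, f x := by
  rw [← (measurePreserving_sliceEquiv hω).integral_comp' (g := f), integral_prod _ ?_]
  · simp only [radon, sliceEquiv_apply]
  · simpa only [sliceEquiv_apply] using integrable_comp_smul_add hω hf

end Radon

namespace SchwartzMap

variable {E F : Type*} [NormedAddCommGroup E] [NormedAddCommGroup F] [NormedSpace ℝ F]

lemma exists_norm_le_mul_one_add_norm_rpow_neg [NormedSpace ℝ E] (f : 𝓢(E, F)) (l : ℕ) :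
    ∃ C, 0 ≤ C ∧ ∀ x, ‖f x‖ ≤ C * (1 + ‖x‖) ^ (-(l : ℝ)) := by
  obtain ⟨C₁, hC₁, h₁⟩ := f.decay 0 0
  obtain ⟨C₂, hC₂, h₂⟩ := f.decay l 0
  refine ⟨2 ^ l * (C₁ + C₂), by positivity, fun x ↦ ?_⟩
  simpa using pow_mul_le_of_le_of_pow_mul_le (k := 0) (norm_nonneg x) (norm_nonneg (f x))
    (by simpa using h₁ x) (by simpa using h₂ x)

lemma integrable_comp_smul_right [NormedSpace ℝ E] (g : 𝓢(E, F)) {ω : E} (hω : ω ≠ 0) :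
    Integrable (fun ν : ℝ ↦ g (ν • ω)) := by
  refine (compCLM ℝ (g := fun ν : ℝ ↦ ν • ω)
    (ContinuousLinearMap.toSpanSingleton ℝ ω).hasTemperateGrowth ⟨1, ‖ω‖⁻¹, fun ν ↦ ?_⟩ g).integrable
  rw [pow_one, norm_smul, mul_add, mul_comm ‖ν‖, inv_mul_cancel_left₀ (norm_ne_zero_iff.2 hω)]
  exact le_add_of_nonneg_left (by positivity)

variable [InnerProductSpace ℝ E] [FiniteDimensional ℝ E] [MeasurableSpace E] [BorelSpace E]
  {ω : E}

theorem continuous_radon (hω : ‖ω‖ = 1) (f : 𝓢(E, F)) : Continuous (radon f ω) := by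
  set l := (volume : Measure (ℝ ∙ ω)ᗮ).integrablePower
  obtain ⟨C, hC, hf⟩ := f.exists_norm_le_mul_one_add_norm_rpow_neg l
  refine continuous_of_dominated (bound := fun y : (ℝ ∙ ω)ᗮ ↦ C * (1 + ‖y‖) ^ (-(l : ℝ)))
    (fun t ↦ (f.continuous.comp (by fun_prop)).aestronglyMeasurable)
    (fun t ↦ Eventually.of_forall fun y ↦ (hf _).trans ?_)
    ((Measure.integrable_pow_neg_integrablePower _).const_mul C)
    (Eventually.of_forall fun y ↦ f.continuous.comp (by fun_prop))
  exact mul_le_mul_of_nonneg_left (Real.rpow_le_rpow_of_nonpos (by positivity)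
    (by grw [norm_le_norm_smul_add hω t y]) (by simp)) hC

end SchwartzMap

section FourierSlice

variable {E F : Type*} [NormedAddCommGroup E] [InnerProductSpace ℝ E] [FiniteDimensional ℝ E]
  [MeasurableSpace E] [BorelSpace E] [NormedAddCommGroup F] [NormedSpace ℂ F] {ω : E}

theorem fourier_radon (hω : ‖ω‖ = 1) {f : E → F} (hf : Integrable f) (ν : ℝ) :
    𝓕 (radon f ω) ν = 𝓕 f (ν • ω) := by
  rw [Real.fourier_real_eq, Real.fourier_eq,
    ← integral_radon hω ((Real.fourierIntegral_convergent_iff _).2 hf)]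
  congr 1 with t
  simp only [radon, inner_smul_add_smul hω, Circle.smul_def, integral_smul]

variable [CompleteSpace F]

theorem SchwartzMap.radon_eq_fourierInv (hω : ‖ω‖ = 1) (f : 𝓢(E, F)) :
    radon f ω = 𝓕⁻ (fun ν : ℝ ↦ 𝓕 f (ν • ω)) := by
  have hfourier : 𝓕 (radon f ω) = fun ν : ℝ ↦ 𝓕 f (ν • ω) :=
    funext (fourier_radon hω f.integrable)
  have hω₀ : ω ≠ 0 := norm_ne_zero_iff.1 (by simp [hω])
  rw [← hfourier, (f.continuous_radon hω).fourierInv_fourier_eq (integrable_radon hω f.integrable)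
    (hfourier ▸ (𝓕 f).integrable_comp_smul_right hω₀)]

end FourierSlice

lemma FT_eq_fourier {d : ℕ} (f : Rd d → ℂ) (ξ : Rd d) : FT f ξ = 𝓕 f ((2 * π)⁻¹ • ξ) := by
  rw [FT, Real.fourier_eq']
  congr 1 with x
  rw [real_inner_smul_right, smul_eq_mul]
  congr 2
  push_cast
  field_simp

theorem radon_eq_inv_fourier_general (d : ℕ) (f : SchwartzMap (Rd d) ℂ)
    (ω : Rd d) (hω : ‖ω‖ = 1) (s : ℝ) :
    (∫ y : ((ℝ ∙ ω)ᗮ : Submodule ℝ (Rd d)), f (s • ω + (y : Rd d))) =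
      ((2 * π : ℝ) : ℂ)⁻¹ *
        ∫ ν : ℝ, Complex.exp (Complex.I * (s : ℂ) * (ν : ℂ)) * FT (⇑f) (ν • ω) := by
  have h2π : 0 < 2 * π := by positivity
  calc (∫ y : ((ℝ ∙ ω)ᗮ : Submodule ℝ (Rd d)), f (s • ω + (y : Rd d)))
      = 𝓕⁻ (fun ν : ℝ ↦ 𝓕 f (ν • ω)) s := congrFun (f.radon_eq_fourierInv hω) s
    _ = ∫ ν : ℝ, Complex.exp (Complex.I * s * ↑(2 * π * ν)) * FT f ((2 * π * ν) • ω) := by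
      rw [Real.fourierInv_eq']
      congr 1 with ν
      rw [FT_eq_fourier, smul_smul, inv_mul_cancel_left₀ h2π.ne', smul_eq_mul]
      congr 2
      rw [RCLike.inner_apply, conj_trivial]
      push_cast
      ring
    _ = _ := by
      rw [Measure.integral_comp_mul_left (fun ν : ℝ ↦ Complex.exp (Complex.I * s * ν) * FT f (ν • ω)),
        abs_of_pos (inv_pos.2 h2π), Complex.real_smul, Complex.ofReal_inv]

/-- The Radon transform of a Schwartz function along the hyperplane
`{y : ω·y = s}` equals the inverse one-dimensional Fourier transform of `ν ↦ f̂(νω)` at `s`. -/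
theorem radon_eq_inv_fourier (d : ℕ) (hd : 1 ≤ d) (f : SchwartzMap (Rd d) ℂ)
    (ω : Rd d) (hω : ‖ω‖ = 1) (s : ℝ) :
    (∫ y : ((ℝ ∙ ω)ᗮ : Submodule ℝ (Rd d)), f (s • ω + (y : Rd d))) =
      ((2 * π : ℝ) : ℂ)⁻¹ *
        ∫ ν : ℝ, Complex.exp (Complex.I * (s : ℂ) * (ν : ℂ)) * FT (⇑f) (ν • ω) :=
  radon_eq_inv_fourier_general d f ω hω s
end
end
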